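/- arXiv:2210.03034 — 8 statements merged into one kernel-verified Lean document; each statement's English description precedes it below -/
import Mathlib

section
/- For any topological group G, the set of compact subgroups 𝒮(G) = {K ∈ 𝒦(G) : K is a subgroup of G} is closed in 𝒦(G) with the Vietoris topology. -/
open TopologicalSpace

/-- The Vietoris topology on the space of nonempty compact subsets of a topological space:
it is generated by the sets `{K : K ⊆ U}` and `{K : K ∩ U ≠ ∅}` for `U` open. -/
def vietorisTopology (X : Type*) [TopologicalSpace X] :
    TopologicalSpace (NonemptyCompacts X) :=
  TopologicalSpace.generateFrom
    ({S | ∃ U : Set X, IsOpen U ∧ S = {K : NonemptyCompacts X | (K : Set X) ⊆ U}} ∪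
     {S | ∃ U : Set X, IsOpen U ∧ S = {K : NonemptyCompacts X | ((K : Set X) ∩ U).Nonempty}})

/-! If `K` is not closed under `f`, say `f (a, b) ∉ K`, separate `K` from `f (a, b)` by disjoint
open sets `U ⊇ K` and `V ∋ f (a, b)`, and pick open `W₁ ∋ a`, `W₂ ∋ b` with `f (W₁ × W₂) ⊆ V`.
Every compact set inside `U` that meets both `W₁` and `W₂` then fails to be closed under `f`.
For subgroups take `f (x, y) = x * y⁻¹`. -/

namespace vietorisTopology

open Topology

variable {X : Type*} [TopologicalSpace X]

theorem isOpen_setOf_subset {U : Set X} (hU : IsOpen U) :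
    IsOpen[vietorisTopology X] {K : NonemptyCompacts X | (K : Set X) ⊆ U} :=
  isOpen_generateFrom_of_mem (Or.inl ⟨U, hU, rfl⟩)

theorem isOpen_setOf_inter_nonempty {U : Set X} (hU : IsOpen U) :
    IsOpen[vietorisTopology X] {K : NonemptyCompacts X | ((K : Set X) ∩ U).Nonempty} :=
  isOpen_generateFrom_of_mem (Or.inr ⟨U, hU, rfl⟩)

theorem isClosed_setOf_forall_mem_apply_mem [T2Space X] {f : X × X → X} (hf : Continuous f) :
    IsClosed[vietorisTopology X] {K : NonemptyCompacts X | ∀ x ∈ K, ∀ y ∈ K, f (x, y) ∈ K} := by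
  let := vietorisTopology X
  rw [← isOpen_compl_iff, isOpen_iff_forall_mem_open]
  intro K hK
  simp only [Set.mem_compl_iff, Set.mem_ofPred_eq, not_forall] at hK
  obtain ⟨a, ha, b, hb, hab⟩ := hK
  obtain ⟨U, V, hU, hV, hKU, habV, hUV⟩ := K.isCompact.separation_of_notMem hab
  obtain ⟨W₁, W₂, hW₁, hW₂, haW₁, hbW₂, hW⟩ := isOpen_prod_iff.mp (hV.preimage hf) a b habV
  refine ⟨{L | (L : Set X) ⊆ U} ∩ {L | ((L : Set X) ∩ W₁).Nonempty} ∩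
      {L | ((L : Set X) ∩ W₂).Nonempty}, ?_,
    ((isOpen_setOf_subset hU).inter (isOpen_setOf_inter_nonempty hW₁)).inter
      (isOpen_setOf_inter_nonempty hW₂),
    ⟨⟨hKU, a, ha, haW₁⟩, b, hb, hbW₂⟩⟩
  rintro L ⟨⟨hLU, x, hxL, hxW₁⟩, y, hyL, hyW₂⟩ hL
  exact hUV.ne_of_mem (hLU (hL x hxL y hyL)) (hW (Set.mk_mem_prod hxW₁ hyW₂)) rfl

end vietorisTopology

theorem exists_subgroup_coe_eq_iff {G : Type*} [Group G] {s : Set G} (hs : s.Nonempty) :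
    (∃ H : Subgroup G, s = H) ↔ ∀ x ∈ s, ∀ y ∈ s, x * y⁻¹ ∈ s := by
  constructor
  · rintro ⟨H, rfl⟩ x hx y hy
    exact H.mul_mem hx (H.inv_mem hy)
  · intro hs'
    exact ⟨Subgroup.ofDiv s hs hs', rfl⟩

/-- For a (Hausdorff) topological group `G`, the set of compact subgroups is closed in the
space of nonempty compact subsets of `G` with the Vietoris topology. -/
theorem isClosed_compactSubgroups {G : Type*} [Group G] [TopologicalSpace G]
    [IsTopologicalGroup G] [T2Space G] :
    @IsClosed (NonemptyCompacts G) (vietorisTopology G)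
      {K : NonemptyCompacts G | ∃ H : Subgroup G, (K : Set G) = (H : Set G)} := by
  have hsubgroups : {K : NonemptyCompacts G | ∃ H : Subgroup G, (K : Set G) = (H : Set G)} =
      {K | ∀ x ∈ K, ∀ y ∈ K, x * y⁻¹ ∈ K} :=
    Set.ext fun K => exists_subgroup_coe_eq_iff K.nonempty
  rw [hsubgroups]
  exact vietorisTopology.isClosed_setOf_forall_mem_apply_mem
    (f := fun p : G × G => p.1 * p.2⁻¹) (by fun_prop)
end

section
/- Let G be a countable group and H a group such that every isomorphism between two finitely generated subgroups of H extends to an automorphism of H. If every finitely generated subgroup of G embeds into H, then G embeds into H. -/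
/-!
Enumerate `G` and let `Kₙ` be the subgroup generated by the first `n + 1` elements, so that `G`
is the increasing union of the finitely generated groups `Kₙ`. Given an embedding `fₙ : Kₙ → H`
and any embedding `g : Kₙ₊₁ → H`, the images of `Kₙ` under `fₙ` and under `g` are isomorphic
finitely generated subgroups of `H`; an automorphism `φ` of `H` extending this isomorphism makes
`φ ∘ g` an embedding of `Kₙ₊₁` extending `fₙ`. The resulting compatible embeddings glue to an
embedding of `G`.
-/

open Function

def Group.IsHomogeneous (H : Type*) [Group H] : Prop :=
  ∀ A B : Subgroup H, A.FG → B.FG → ∀ e : A ≃* B, ∃ φ : H ≃* H, ∀ a : A, φ a = e a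

namespace Group.IsHomogeneous

variable {H : Type*} [Group H]

theorem exists_injective_comp_eq (hH : IsHomogeneous H) {K L : Type*} [Group K] [Group.FG K]
    [Group L] {i : K →* L} (hi : Injective i) {f : K →* H} (hf : Injective f) {g : L →* H}
    (hg : Injective g) : ∃ g' : L →* H, Injective g' ∧ g'.comp i = f := by
  have hgi : Injective (g.comp i) := hg.comp hi
  let e : (g.comp i).range ≃* f.range :=
    (MonoidHom.ofInjective hgi).symm.trans (MonoidHom.ofInjective hf)
  obtain ⟨φ, hφ⟩ := hH _ _ ((Group.fg_iff_subgroup_fg _).1 inferInstance)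
    ((Group.fg_iff_subgroup_fg _).1 inferInstance) e
  refine ⟨φ.toMonoidHom.comp g, φ.injective.comp hg, MonoidHom.ext fun x => ?_⟩
  simpa [e, MonoidHom.ofInjective_apply] using hφ (MonoidHom.ofInjective hgi x)

theorem exists_injective_succ_comp_eq (hH : IsHomogeneous H) {G : Type*} [Group G]
    {K : ℕ → Subgroup G} (hK : Monotone K) (hfg : ∀ n, (K n).FG)
    (hemb : ∀ n, ∃ f : K n →* H, Injective f) :
    ∃ f : ∀ n, K n →* H, (∀ n, Injective (f n)) ∧
      ∀ n, (f (n + 1)).comp (Subgroup.inclusion (hK n.le_succ)) = f n := by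
  have : ∀ n, Group.FG (K n) := fun n => (Group.fg_iff_subgroup_fg _).2 (hfg n)
  choose next hnext_inj hnext using fun n (f : {f : K n →* H // Injective f}) =>
    hH.exists_injective_comp_eq (Subgroup.inclusion_injective (hK n.le_succ)) f.2
      (hemb (n + 1)).choose_spec
  let F : ∀ n, {f : K n →* H // Injective f} :=
    fun n => Nat.rec ⟨(hemb 0).choose, (hemb 0).choose_spec⟩
      (fun n f => ⟨next n f, hnext_inj n f⟩) n
  exact ⟨fun n => (F n).1, fun n => (F n).2, fun n => hnext n (F n)⟩

end Group.IsHomogeneous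

section Glue

variable {G H : Type*} [Group G] [Monoid H]

theorem MonoidHom.comp_inclusion_of_le_of_succ {K : ℕ → Subgroup G} (hK : Monotone K)
    {f : ∀ n, K n →* H} (hf : ∀ n, (f (n + 1)).comp (Subgroup.inclusion (hK n.le_succ)) = f n)
    {i j : ℕ} (hij : i ≤ j) : (f j).comp (Subgroup.inclusion (hK hij)) = f i := by
  induction j, hij using Nat.le_induction with
  | base => ext x; exact congrArg (f i) (SubgroupClass.inclusion_self x)
  | succ j hij ih =>
    rw [← ih, ← hf j, MonoidHom.comp_assoc]
    rfl

theorem exists_injective_of_compatible_on_cover {ι : Type*} [Preorder ι] [IsDirectedOrder ι]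
    {K : ι → Subgroup G} (hK : Monotone K) (hcover : ∀ g, ∃ i, g ∈ K i) {f : ∀ i, K i →* H}
    (hf_inj : ∀ i, Injective (f i))
    (hf : ∀ i j (hij : i ≤ j), (f j).comp (Subgroup.inclusion (hK hij)) = f i) :
    ∃ F : G →* H, Injective F := by
  have common : ∀ a b : G, ∃ k, a ∈ K k ∧ b ∈ K k := fun a b => by
    obtain ⟨i, hi⟩ := hcover a
    obtain ⟨j, hj⟩ := hcover b
    obtain ⟨k, hik, hjk⟩ := directed_of (· ≤ ·) i j
    exact ⟨k, hK hik hi, hK hjk hj⟩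
  have agree : ∀ g i j (hi : g ∈ K i) (hj : g ∈ K j), f i ⟨g, hi⟩ = f j ⟨g, hj⟩ := by
    intro g i j hi hj
    obtain ⟨k, hik, hjk⟩ := directed_of (· ≤ ·) i j
    rw [← hf i k hik, ← hf j k hjk]
    rfl
  choose idx hidx using hcover
  let F : G → H := fun g => f (idx g) ⟨g, hidx g⟩
  have hF : ∀ g i (hg : g ∈ K i), F g = f i ⟨g, hg⟩ := fun g i hg => agree g _ i _ hg
  refine ⟨{ toFun := F, map_one' := map_one (f (idx 1)), map_mul' := fun a b => ?_ },
    fun a b hab => ?_⟩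
  all_goals obtain ⟨k, ha, hb⟩ := common a b
  · rw [hF a k ha, hF b k hb, hF (a * b) k (mul_mem ha hb), ← map_mul]
    rfl
  · change F a = F b at hab
    rw [hF a k ha, hF b k hb] at hab
    exact congrArg Subtype.val (hf_inj k hab)

end Glue

theorem Group.exists_fg_chain_of_countable (G : Type*) [Group G] [Countable G] :
    ∃ K : ℕ → Subgroup G, Monotone K ∧ (∀ n, (K n).FG) ∧ ∀ g, ∃ n, g ∈ K n := by
  obtain ⟨en, hen⟩ := exists_surjective_nat G
  refine ⟨fun n => Subgroup.closure (en '' Set.Iic n),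
    fun m n hmn => Subgroup.closure_mono (Set.image_mono (Set.Iic_subset_Iic.2 hmn)),
    fun n => (Subgroup.fg_iff _).2 ⟨_, rfl, (Set.finite_Iic n).image _⟩, fun g => ?_⟩
  obtain ⟨n, rfl⟩ := hen g
  exact ⟨n, Subgroup.subset_closure ⟨n, Set.mem_Iic.2 le_rfl, rfl⟩⟩

/-- If `G` is a countable group and `H` is a homogeneous group (every isomorphism between two
finitely generated subgroups of `H` extends to an automorphism of `H`), and every finitely
generated subgroup of `G` embeds into `H`, then `G` embeds into `H`. -/
theorem embeds_of_fg_embeds {G H : Type*} [Group G] [Countable G] [Group H]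
    (hhom : ∀ (A B : Subgroup H), A.FG → B.FG → ∀ e : A ≃* B,
      ∃ φ : H ≃* H, ∀ a : A, φ (a : H) = ((e a : B) : H))
    (hemb : ∀ K : Subgroup G, K.FG → ∃ f : K →* H, Function.Injective f) :
    ∃ f : G →* H, Function.Injective f := by
  obtain ⟨K, hK, hfg, hcover⟩ := Group.exists_fg_chain_of_countable G
  obtain ⟨f, hf_inj, hf_succ⟩ := Group.IsHomogeneous.exists_injective_succ_comp_eq hhom hK hfg
    fun n => hemb (K n) (hfg n)
  exact exists_injective_of_compatible_on_cover hK hcover hf_inj fun _ _ =>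
    MonoidHom.comp_inclusion_of_le_of_succ hK hf_succ
end

section
/- Let G and H be compact topological groups with H connected, and let Φ : G → H be a surjective continuous homomorphism. Then the image under Φ of the identity component of G equals H. -/
/-!
In a compact Hausdorff space the connected component of a point is the intersection of its clopen
neighbourhoods, and in a compact group every clopen neighbourhood of `1` contains an open subgroup
`U`. Such a `U` has finite index and is compact, so `Φ(U)` is a closed subgroup of finite index,
hence clopen, hence all of the connected group `H`. Thus every fibre of `Φ` meets every clopen
neighbourhood of `1`, and by compactness it meets their intersection, the identity component.
-/

open Function

theorem IsClosed.inter_connectedComponent_nonempty {X : Type*} [TopologicalSpace X]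
    [CompactSpace X] [T2Space X] {K : Set X} (hK : IsClosed K) (x : X)
    (h : ∀ s, IsClopen s → x ∈ s → (K ∩ s).Nonempty) :
    (K ∩ connectedComponent x).Nonempty := by
  rw [connectedComponent_eq_iInter_isClopen]
  refine hK.isCompact.inter_iInter_nonempty _ (fun s => s.2.1.1) fun u => h _ ?_ ?_
  · exact u.finite_toSet.isClopen_biInter fun s _ => s.2.1
  · exact Set.mem_iInter₂.2 fun s _ => s.2.2

theorem Subgroup.finiteIndex_map_of_surjective {G H : Type*} [Group G] [Group H]
    (K : Subgroup G) [K.FiniteIndex] {f : G →* H} (hf : Surjective f) :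
    (K.map f).FiniteIndex :=
  ⟨fun h0 => K.index_ne_zero_of_finite (zero_dvd_iff.mp (h0 ▸ K.index_map_dvd hf))⟩

theorem OpenSubgroup.map_eq_top_of_surjective {G H : Type*}
    [Group G] [TopologicalSpace G] [IsTopologicalGroup G] [CompactSpace G]
    [Group H] [TopologicalSpace H] [IsTopologicalGroup H] [T2Space H] [ConnectedSpace H]
    (U : OpenSubgroup G) {Φ : G →* H} (hc : Continuous Φ) (hs : Surjective Φ) :
    (U : Subgroup G).map Φ = ⊤ := by
  have : (U : Subgroup G).FiniteIndex := Subgroup.finiteIndex_of_finite_quotient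
  have := (U : Subgroup G).finiteIndex_map_of_surjective hs
  have hclosed : IsClosed ((U : Subgroup G).map Φ : Set H) := by
    rw [Subgroup.coe_map]
    exact (U.isClosed.isCompact.image hc).isClosed
  have hclopen : IsClopen ((U : Subgroup G).map Φ : Set H) :=
    ⟨hclosed, Subgroup.isOpen_of_isClosed_of_finiteIndex _ hclosed⟩
  exact SetLike.coe_injective (hclopen.eq_univ ⟨1, one_mem _⟩)

theorem image_identityComponent_eq_of_connected_general {G H : Type*}
    [Group G] [TopologicalSpace G] [IsTopologicalGroup G] [CompactSpace G] [T2Space G]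
    [Group H] [TopologicalSpace H] [IsTopologicalGroup H] [T2Space H]
    [ConnectedSpace H]
    (Φ : G →* H) (hc : Continuous Φ) (hs : Function.Surjective Φ) :
    Φ '' connectedComponent (1 : G) = Set.univ := by
  refine Set.eq_univ_of_forall fun h => ?_
  have hfibre : ∀ s, IsClopen s → (1 : G) ∈ s → (Φ ⁻¹' {h} ∩ s).Nonempty := by
    intro s hs1 h1s
    obtain ⟨U, hUs⟩ := IsTopologicalGroup.exist_openSubgroup_sub_clopen_nhds_of_one hs1 h1s
    obtain ⟨x, hxU, rfl⟩ : h ∈ (U : Subgroup G).map Φ :=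
      U.map_eq_top_of_surjective hc hs ▸ Subgroup.mem_top h
    exact ⟨x, rfl, hUs hxU⟩
  obtain ⟨x, hxh, hx1⟩ :=
    (isClosed_singleton.preimage hc).inter_connectedComponent_nonempty 1 hfibre
  exact ⟨x, hx1, hxh⟩

/-- If `G` and `H` are compact (Hausdorff) topological groups with `H` connected and
`Φ : G → H` is a surjective continuous homomorphism, then the image under `Φ` of the
identity component of `G` is all of `H`. -/
theorem image_identityComponent_eq_of_connected {G H : Type*}
    [Group G] [TopologicalSpace G] [IsTopologicalGroup G] [CompactSpace G] [T2Space G]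
    [Group H] [TopologicalSpace H] [IsTopologicalGroup H] [CompactSpace H] [T2Space H]
    [ConnectedSpace H]
    (Φ : G →* H) (hc : Continuous Φ) (hs : Function.Surjective Φ) :
    Φ '' connectedComponent (1 : G) = Set.univ :=
  image_identityComponent_eq_of_connected_general Φ hc hs
end

section
/- The finite subgroups of 𝕋^ℕ with finite support are dense in the space 𝒮(𝕋^ℕ) of compact subgroups of 𝕋^ℕ with the Hausdorff metric. That is, for every compact subgroup K ≤ 𝕋^ℕ and ε > 0 there exists a finite subgroup F ≤ 𝕋^ℕ, supported on finitely many coordinates, with Hausdorff distance d_H(F, K) < ε. -/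
/-!
Cover `K` by finitely many `ε/4`-balls centred at points `y ∈ K`. By compactness some multiple
`q • y` (`q > 0`) is close to `0`; replacing the first `N` coordinates of `y` by nearby
`q`-torsion points of `𝕋` and the others by `0` gives a finitely supported torsion element `x`
with `c • x` close to `c • y ∈ K` for every `c ≤ q`, hence for every integer `c`. The group `F`
generated by these `x` is finite and finitely supported. An element of `F` is a sum of one
multiple of each generator, so it lies near `K`; a point of `K` lies near a centre `y`, hence
near its `x ∈ F`.
-/

attribute [local instance] PiCountable.metricSpace

open Metric Set Finset

theorem exists_pos_nsmul_dist_zero_lt {M : Type*} [AddMonoid M] [PseudoMetricSpace M]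
    [IsIsometricVAdd M M] {K : Set M} (hK : IsCompact K) {y : M}
    (hy : ∀ n : ℕ, n • y ∈ K) {δ : ℝ} (hδ : 0 < δ) : ∃ q : ℕ, 0 < q ∧ dist (q • y) 0 < δ := by
  obtain ⟨_, -, φ, hφ, hlim⟩ := hK.tendsto_subseq (x := fun n : ℕ => n • y) hy
  obtain ⟨N, hN⟩ := Metric.cauchySeq_iff'.1 hlim.cauchySeq δ hδ
  have hlt : φ N < φ (N + 1) := hφ N.lt_succ_self
  refine ⟨φ (N + 1) - φ N, by omega, ?_⟩
  have hsplit : φ (N + 1) • y = φ N • y + (φ (N + 1) - φ N) • y := by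
    rw [← add_nsmul, Nat.add_sub_cancel' hlt.le]
  calc dist ((φ (N + 1) - φ N) • y) 0
      = dist (φ N • y + (φ (N + 1) - φ N) • y) (φ N • y + 0) := (dist_add_left _ _ _).symm
    _ = dist (φ (N + 1) • y) (φ N • y) := by rw [add_zero, hsplit]
    _ < δ := hN (N + 1) N.le_succ

section IsometricGroup

variable {G : Type*} [AddCommGroup G] [PseudoMetricSpace G] [IsIsometricVAdd G G]

theorem IsIsometricVAdd.dist_add_add_le (a b c d : G) :
    dist (a + b) (c + d) ≤ dist a c + dist b d :=
  calc dist (a + b) (c + d) ≤ dist (b + a) (b + c) + dist (c + b) (c + d) := by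
        simpa only [add_comm a b, add_comm c b] using dist_triangle (b + a) (c + b) (c + d)
    _ = dist a c + dist b d := by rw [dist_add_left, dist_add_left]

theorem exists_dist_le_card_mul_of_mem_closure (K : AddSubgroup G) {η : ℝ} (S : Finset G)
    (hS : ∀ s ∈ S, ∀ c : ℤ, ∃ g ∈ K, dist (c • s) g ≤ η) {f : G}
    (hf : f ∈ AddSubgroup.closure (S : Set G)) : ∃ g ∈ K, dist f g ≤ #S * η := by
  classical
  induction S using Finset.induction_on generalizing f with
  | empty =>
    rw [coe_empty, AddSubgroup.closure_empty, AddSubgroup.mem_bot] at hf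
    exact ⟨0, zero_mem K, by simp [hf]⟩
  | insert a S ha ih =>
    rw [coe_insert, insert_eq, AddSubgroup.closure_union, AddSubgroup.mem_sup] at hf
    obtain ⟨u, hu, v, hv, rfl⟩ := hf
    obtain ⟨c, rfl⟩ := AddSubgroup.mem_closure_singleton.1 hu
    obtain ⟨g, hgK, hg⟩ := hS a (mem_insert_self a S) c
    obtain ⟨g', hg'K, hg'⟩ := ih (fun s hs => hS s (mem_insert_of_mem hs)) hv
    refine ⟨g + g', add_mem hgK hg'K, ?_⟩
    calc dist (c • a + v) (g + g') ≤ dist (c • a) g + dist v g' :=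
          IsIsometricVAdd.dist_add_add_le _ _ _ _
      _ ≤ η + #S * η := add_le_add hg hg'
      _ = #(insert a S) * η := by rw [card_insert_of_notMem ha]; push_cast; ring

end IsometricGroup

theorem AddSubgroup.finite_closure_of_isOfFinAddOrder {G : Type*} [AddCommGroup G]
    (S : Finset G) (hS : ∀ s ∈ S, IsOfFinAddOrder s) :
    (AddSubgroup.closure (S : Set G) : Set G).Finite := by
  have hle : AddSubgroup.closure (S : Set G) ≤ AddCommGroup.torsion G :=
    (AddSubgroup.closure_le _).2 hS
  have : IsAddTorsion (AddSubgroup.closure (S : Set G)) := fun g =>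
    AddSubmonoid.isOfFinAddOrder_coe.1 (hle g.2)
  have := AddCommGroup.finite_of_fg_isAddTorsion _ this
  exact Set.toFinite _

theorem AddSubgroup.finite_closure_of_isOfFinAddOrder_of_finite_support {ι : Type*}
    {F : ι → Type*} [∀ i, AddCommGroup (F i)] (S : Finset (∀ i, F i))
    (hS : ∀ s ∈ S, IsOfFinAddOrder s ∧ {i | s i ≠ 0}.Finite) :
    (AddSubgroup.closure (S : Set (∀ i, F i)) : Set (∀ i, F i)).Finite ∧
      {i | ∃ g ∈ AddSubgroup.closure (S : Set (∀ i, F i)), g i ≠ 0}.Finite := by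
  refine ⟨finite_closure_of_isOfFinAddOrder S fun s hs => (hS s hs).1,
    (S.finite_toSet.biUnion fun s hs => (hS s hs).2).subset ?_⟩
  rintro i ⟨g, hg, hgi⟩
  by_contra hi
  have hle : closure (S : Set (∀ i, F i)) ≤ pi (⋃ s ∈ S, {i | s i ≠ 0})ᶜ fun _ => ⊥ :=
    (closure_le _).2 fun s hs j hj => by
      simp only [mem_compl_iff, mem_iUnion, not_exists, mem_ofPred_eq, not_not] at hj
      exact mem_bot.2 (hj s hs)
  exact hgi (mem_bot.1 (hle hg i hi))

instance PiCountable.isIsometricVAdd {ι : Type*} [Encodable ι] {F : ι → Type*}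
    [∀ i, MetricSpace (F i)] [∀ i, Add (F i)] [∀ i, IsIsometricVAdd (F i) (F i)] :
    IsIsometricVAdd (∀ i, F i) (∀ i, F i) :=
  ⟨fun c => Isometry.of_dist_eq fun x y => by
    simp only [PiCountable.dist_eq_tsum]
    exact tsum_congr fun i => by
      rw [Pi.vadd_apply', Pi.vadd_apply', vadd_eq_add, vadd_eq_add, dist_add_left]⟩

theorem PiCountable.dist_le_sum_add_two_mul_pow {F : ℕ → Type*} [∀ n, MetricSpace (F n)]
    (x y : ∀ n, F n) (N : ℕ) :
    dist x y ≤ ∑ n ∈ range N, dist (x n) (y n) + 2 * 2⁻¹ ^ N := by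
  have hgeom : Summable fun n : ℕ => (2⁻¹ : ℝ) ^ (n + N) := by
    simpa only [pow_add, one_div] using summable_geometric_two.mul_right ((2⁻¹ : ℝ) ^ N)
  rw [dist_eq_tsum, ← (dist_summable x y).sum_add_tsum_nat_add N]
  simp only [Encodable.encode_nat]
  gcongr with n
  · exact min_le_right _ _
  · calc ∑' n : ℕ, min ((2⁻¹ : ℝ) ^ (n + N)) (dist (x (n + N)) (y (n + N)))
        ≤ ∑' n : ℕ, (2⁻¹ : ℝ) ^ (n + N) :=
          ((dist_summable x y).comp_injective (add_left_injective N)).tsum_le_tsum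
            (fun n => min_le_left _ _) hgeom
      _ = 2 * 2⁻¹ ^ N := by
          simp only [pow_add, tsum_mul_right, tsum_geometric_inv_two]

theorem AddCircle.exists_nsmul_eq_zero_dist_nsmul_le {p : ℝ} (y : AddCircle p) {q : ℕ}
    (hq : 0 < q) : ∃ x : AddCircle p, q • x = 0 ∧ ∀ c ≤ q, dist (c • x) (c • y) ≤ ‖q • y‖ := by
  obtain ⟨t, rfl⟩ := QuotientAddGroup.mk_surjective y
  have hq' : (q : ℝ) ≠ 0 := by positivity
  -- `e` is the representative of `q • y` nearest to `0`; moving `y` by `e / q` kills `q • y`.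
  set e := q * t - round (p⁻¹ * (q * t)) * p
  have he : ‖q • (t : AddCircle p)‖ = |e| := by
    rw [← QuotientAddGroup.mk_nsmul, nsmul_eq_mul, ← AddCircle.norm_eq]
  refine ⟨((t - e / q : ℝ) : AddCircle p), ?_, fun c hc => ?_⟩
  · rw [← AddCircle.coe_nsmul, AddCircle.coe_eq_zero_iff]
    exact ⟨round (p⁻¹ * (q * t)), by simp only [e, nsmul_eq_mul, zsmul_eq_mul]; field_simp; ring⟩
  · rw [he, dist_eq_norm, ← AddCircle.coe_nsmul, ← QuotientAddGroup.mk_nsmul,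
      ← AddCircle.coe_sub]
    have hce : c • (t - e / q) - c • t = -((c / q) * e) := by
      simp only [nsmul_eq_mul]; field_simp; ring
    calc ‖((c • (t - e / q) - c • t : ℝ) : AddCircle p)‖ ≤ |c • (t - e / q) - c • t| :=
          QuotientAddGroup.norm_mk_le_norm
      _ = c / q * |e| := by rw [hce, abs_neg, abs_mul, abs_of_nonneg (by positivity)]
      _ ≤ |e| := mul_le_of_le_one_left (abs_nonneg e)
          ((div_le_one (by positivity)).2 (by exact_mod_cast hc))

theorem exists_nsmul_eq_zero_dist_nsmul_le_of_dist_lt {p : ℝ} (y : ∀ _ : ℕ, AddCircle p)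
    {q : ℕ} (hq : 0 < q) (N : ℕ) (hy : dist (q • y) 0 < 2⁻¹ ^ N) :
    ∃ x : ∀ _ : ℕ, AddCircle p, q • x = 0 ∧ (∀ n, N ≤ n → x n = 0) ∧
      ∀ c ≤ q, dist (c • x) (c • y) ≤ N * dist (q • y) 0 + 2 * 2⁻¹ ^ N := by
  choose z hzq hzc using fun n => (y n).exists_nsmul_eq_zero_dist_nsmul_le hq
  have hcoord : ∀ n < N, ‖q • y n‖ ≤ dist (q • y) 0 := fun n hn => by
    simpa using PiCountable.dist_le_dist_pi_of_dist_lt (i := n)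
      (hy.trans_le (pow_le_pow_of_le_one (by norm_num) (by norm_num) hn.le))
  refine ⟨fun n => if n < N then z n else 0, funext fun n => ?_, fun n hn => if_neg (by omega),
    fun c hc => ?_⟩
  · by_cases hn : n < N <;> simp [hn, hzq]
  calc dist (c • fun n => if n < N then z n else 0) (c • y)
      ≤ ∑ n ∈ range N, dist ((c • fun n => if n < N then z n else 0) n) ((c • y) n)
        + 2 * 2⁻¹ ^ N := PiCountable.dist_le_sum_add_two_mul_pow _ _ N
    _ ≤ ∑ _n ∈ range N, dist (q • y) 0 + 2 * 2⁻¹ ^ N := by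
        gcongr with n hn
        have hn : n < N := mem_range.1 hn
        simpa [hn] using (hzc n c hc).trans (hcoord n hn)
    _ = N * dist (q • y) 0 + 2 * 2⁻¹ ^ N := by simp

theorem exists_isOfFinAddOrder_dist_le_of_mem {p : ℝ} {K : AddSubgroup (∀ _ : ℕ, AddCircle p)}
    (hK : IsCompact (K : Set (∀ _ : ℕ, AddCircle p))) {y : ∀ _ : ℕ, AddCircle p} (hy : y ∈ K)
    {η : ℝ} (hη : 0 < η) :
    ∃ x : ∀ _ : ℕ, AddCircle p, IsOfFinAddOrder x ∧ {n | x n ≠ 0}.Finite ∧ dist x y ≤ η ∧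
      ∀ c : ℤ, ∃ g ∈ K, dist (c • x) g ≤ η := by
  obtain ⟨N, hN⟩ : ∃ N : ℕ, 2 * (2⁻¹ : ℝ) ^ N < η / 2 := by
    obtain ⟨N, hN⟩ := exists_pow_lt_of_lt_one (by positivity : 0 < η / 4)
      (by norm_num : (2⁻¹ : ℝ) < 1)
    exact ⟨N, by linarith⟩
  obtain ⟨q, hq, hqy⟩ := exists_pos_nsmul_dist_zero_lt hK (fun n => nsmul_mem hy n)
    (δ := min (2⁻¹ ^ N) (η / (2 * (N + 1)))) (by positivity)
  obtain ⟨x, hxq, hxN, hxc⟩ :=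
    exists_nsmul_eq_zero_dist_nsmul_le_of_dist_lt y hq N (hqy.trans_le (min_le_left _ _))
  have hNq : N * dist (q • y) 0 ≤ η / 2 :=
    calc N * dist (q • y) 0 ≤ N * (η / (2 * (N + 1))) :=
          mul_le_mul_of_nonneg_left (hqy.le.trans (min_le_right _ _)) (by positivity)
      _ ≤ η / 2 := by
          rw [mul_div_assoc', div_le_div_iff₀ (by positivity) (by norm_num)]
          nlinarith
  have hmul : ∀ c ≤ q, dist (c • x) (c • y) ≤ η := fun c hc => by linarith [hxc c hc]
  have hx : IsOfFinAddOrder x := isOfFinAddOrder_iff_nsmul_eq_zero.2 ⟨q, hq, hxq⟩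
  refine ⟨x, hx, (finite_Iio N).subset fun n hn => ?_, by simpa using hmul 1 hq, fun c => ?_⟩
  · by_contra h
    exact hn (hxN n (not_lt.1 h))
  · classical
    obtain ⟨k, hk, hkc⟩ := Finset.mem_image.1 (hx.mem_zmultiples_iff_mem_range_addOrderOf.1
      (AddSubgroup.zsmul_mem_zmultiples x c))
    refine ⟨k • y, nsmul_mem hy k, hkc ▸ hmul k ?_⟩
    exact (mem_range.1 hk).le.trans (addOrderOf_le_of_nsmul_eq_zero hq hxq)

/-- The finite subgroups of `𝕋^ℕ` with finite support are dense in the space of compact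
subgroups of `𝕋^ℕ` with the Hausdorff metric: every compact subgroup is within `ε` (in
Hausdorff distance) of a finite subgroup supported on finitely many coordinates. -/
theorem finite_subgroups_dense (K : AddSubgroup (∀ _ : ℕ, AddCircle (1 : ℝ)))
    (hK : IsCompact (K : Set (∀ _ : ℕ, AddCircle (1 : ℝ)))) (ε : ℝ) (hε : 0 < ε) :
    ∃ F : AddSubgroup (∀ _ : ℕ, AddCircle (1 : ℝ)),
      (F : Set (∀ _ : ℕ, AddCircle (1 : ℝ))).Finite ∧
      {n : ℕ | ∃ g ∈ F, g n ≠ 0}.Finite ∧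
      Metric.hausdorffDist (F : Set (∀ _ : ℕ, AddCircle (1 : ℝ)))
        (K : Set (∀ _ : ℕ, AddCircle (1 : ℝ))) < ε := by
  classical
  obtain ⟨T, hTK, hTf, hcover⟩ := finite_cover_balls_of_compact hK (by positivity : 0 < ε / 4)
  lift T to Finset (∀ _ : ℕ, AddCircle (1 : ℝ)) using hTf
  set η := ε / (4 * (#T + 1))
  have hη : 0 < η := by positivity
  have hTη : (#T + 1) * η = ε / 4 := by
    simp only [η]
    field_simp
  choose! x hx_fin hx_supp hx_dist hx_mul using
    fun y (hy : y ∈ K) => exists_isOfFinAddOrder_dist_le_of_mem hK hy hη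
  obtain ⟨hFfin, hFsupp⟩ := AddSubgroup.finite_closure_of_isOfFinAddOrder_of_finite_support
    (T.image x) (by simpa using fun y hy => ⟨hx_fin y (hTK hy), hx_supp y (hTK hy)⟩)
  refine ⟨_, hFfin, hFsupp, (hausdorffDist_le_of_mem_dist (r := ε / 2) (by positivity)
    (fun f hf => ?_) (fun k hk => ?_)).trans_lt (by linarith)⟩
  · obtain ⟨g, hg, hfg⟩ := exists_dist_le_card_mul_of_mem_closure K (T.image x)
      (by simpa using fun y hy => hx_mul y (hTK hy)) hf
    have hST : (#(T.image x) : ℝ) ≤ #T := by exact_mod_cast Finset.card_image_le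
    exact ⟨g, hg, by nlinarith⟩
  · obtain ⟨y, hy, hky⟩ := mem_iUnion₂.1 (hcover hk)
    refine ⟨x y, AddSubgroup.subset_closure (Finset.mem_image_of_mem x hy), ?_⟩
    calc dist k (x y) ≤ dist k y + dist (x y) y := dist_triangle_right _ _ _
      _ ≤ ε / 2 := by nlinarith [(mem_ball.1 hky).le, hx_dist y (hTK hy)]
end

section
/- Let A be a finite abelian group. The set 𝓑_A of compact subgroups K of 𝕋^ℕ admitting a surjective continuous homomorphism onto A is open in the space 𝒮(𝕋^ℕ) of compact subgroups with the Hausdorff metric. -/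
attribute [local instance] PiCountable.metricSpace

open TopologicalSpace Metric

abbrev T := ∀ _ : ℕ, AddCircle (1 : ℝ)

theorem myDist_add (x y z w : T) : dist (x + z) (y + w) ≤ dist x y + dist z w := by
  have h1 : dist (x + z) (y + z) = dist x y := by
    simp only [PiCountable.dist_eq_tsum]
    congr 1; ext i
    simp [Pi.add_apply, dist_add_right]
  have h2 : dist (y + z) (y + w) = dist z w := by
    simp only [PiCountable.dist_eq_tsum]
    congr 1; ext i
    simp [Pi.add_apply, dist_add_left]
  calc dist (x + z) (y + w) ≤ dist (x + z) (y + z) + dist (y + z) (y + w) := dist_triangle _ _ _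
    _ = dist x y + dist z w := by rw [h1, h2]

theorem exists_sep {A : Type*} [TopologicalSpace A] [DiscreteTopology A]
    {s : Set T} (hs : IsCompact s) {f : s → A} (hf : Continuous f) :
    ∃ ε > 0, ∀ x y : s, dist (x : T) (y : T) < ε → f x = f y := by
  have : CompactSpace s := isCompact_iff_compactSpace.1 hs
  set S : Set (s × s) := {p | f p.1 ≠ f p.2} with hS
  have hSc : IsClosed S := by
    have : IsOpen {p : s × s | f p.1 = f p.2} := by
      have : {p : s × s | f p.1 = f p.2} =
          (fun p : s × s => (f p.1, f p.2)) ⁻¹' {q : A × A | q.1 = q.2} := rfl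
      rw [this]
      exact (IsOpen.preimage (by continuity) (isOpen_discrete _))
    have h2 : S = {p : s × s | f p.1 = f p.2}ᶜ := rfl
    rw [h2]
    exact this.isClosed_compl
  have hScomp : IsCompact S := hSc.isCompact
  rcases S.eq_empty_or_nonempty with hSe | hSne
  · refine ⟨1, one_pos, fun x y _ => ?_⟩
    by_contra h
    have : (x, y) ∈ S := h
    simp [hSe] at this
  · obtain ⟨p₀, hp₀, hmin⟩ := hScomp.exists_isMinOn hSne
      (continuous_dist.comp ((continuous_subtype_val.comp continuous_fst).prodMk
        (continuous_subtype_val.comp continuous_snd))).continuousOn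
    refine ⟨dist (p₀.1 : T) (p₀.2 : T), ?_, fun x y hxy => ?_⟩
    · rw [gt_iff_lt, dist_pos]
      intro h
      exact hp₀ (congrArg f (Subtype.ext h))
    · by_contra hne
      have hmem : (x, y) ∈ S := hne
      have h2 := hmin hmem
      simp only [Function.comp] at h2
      exact absurd h2 (not_le.2 hxy)

/-- For a finite (discrete) abelian group `A`, the set of compact subgroups of `𝕋^ℕ` admitting
a continuous surjective homomorphism onto `A` is open in the space of compact subgroups of
`𝕋^ℕ` with the Hausdorff metric. -/
theorem isOpen_admits_surjection_onto_finite (A : Type*) [AddCommGroup A] [Finite A]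
    [TopologicalSpace A] [DiscreteTopology A] :
    IsOpen {K : {L : NonemptyCompacts (∀ _ : ℕ, AddCircle (1 : ℝ)) //
        ∃ H : AddSubgroup (∀ _ : ℕ, AddCircle (1 : ℝ)), (L : Set (∀ _ : ℕ, AddCircle (1 : ℝ))) = H} |
      ∃ (H : AddSubgroup (∀ _ : ℕ, AddCircle (1 : ℝ))),
        (K.1 : Set (∀ _ : ℕ, AddCircle (1 : ℝ))) = H ∧
        ∃ f : H →+ A, Continuous f ∧ Function.Surjective f} := by
  rw [Metric.isOpen_iff]
  rintro ⟨K, hKsub⟩ ⟨H, hH, f, hfc, hfs⟩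
  have hH' : (K : Set T) = ↑H := hH
  have hKH : ∀ {v : T}, v ∈ (K : Set T) → v ∈ H := fun h => (Set.ext_iff.mp hH' _).mp h
  have hHK : ∀ {v : T}, v ∈ H → v ∈ (K : Set T) := fun h => (Set.ext_iff.mp hH' _).mpr h
  have hincl : ∀ x : ↥(K : Set T), (x : T) ∈ H := fun x => hKH x.2
  set F : ↥(K : Set T) → A := fun x => f ⟨x, hincl x⟩ with hF
  have hFc : Continuous F := hfc.comp (continuous_subtype_val.subtype_mk _)
  obtain ⟨ε, hε0, hε⟩ := exists_sep K.isCompact hFc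
  set δ := ε / 4 with hδdef
  have hδ0 : 0 < δ := by positivity
  refine ⟨δ, hδ0, ?_⟩
  rintro ⟨L, hLsub⟩ hball
  obtain ⟨HL, hHL⟩ := hLsub
  rw [mem_ball, Subtype.dist_eq, NonemptyCompacts.dist_eq] at hball
  have hfin : EMetric.hausdorffEdist (L : Set T) (K : Set T) ≠ ⊤ :=
    Metric.hausdorffEdist_ne_top_of_nonempty_of_bounded L.nonempty K.nonempty
      L.isCompact.isBounded K.isCompact.isBounded
  have hpick : ∀ y ∈ (L : Set T), ∃ x ∈ (K : Set T), dist y x < δ := fun y hy =>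
    exists_dist_lt_of_hausdorffDist_lt hy hball hfin
  choose pt hptK hptd using hpick
  have hmemL : ∀ y : ↥HL, (y : T) ∈ (L : Set T) := fun y => by rw [hHL]; exact y.2
  set g0 : ↥HL → A := fun y => F ⟨pt y (hmemL y), hptK _ _⟩ with hg0
  have hadd : ∀ y z : ↥HL, g0 (y + z) = g0 y + g0 z := by
    intro y z
    have hc : ((y + z : ↥HL) : T) = (y : T) + (z : T) := rfl
    set a := pt (y : T) (hmemL y) with ha
    set b := pt (z : T) (hmemL z) with hb
    set c := pt ((y + z : ↥HL) : T) (hmemL (y + z)) with hcc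
    have habK : a + b ∈ (K : Set T) :=
      hHK (H.add_mem (hKH (hptK _ _)) (hKH (hptK _ _)))
    have hd : dist c (a + b) < ε := by
      have h1 : dist ((y + z : ↥HL) : T) c < δ := hptd _ _
      have h2 : dist ((y : T) + (z : T)) (a + b) ≤ dist (y : T) a + dist (z : T) b :=
        myDist_add _ _ _ _
      have h3 : dist (y : T) a < δ := hptd _ _
      have h4 : dist (z : T) b < δ := hptd _ _
      calc dist c (a + b) ≤ dist c ((y : T) + (z : T)) + dist ((y : T) + (z : T)) (a + b) :=
            dist_triangle _ _ _
        _ < δ + (δ + δ) := by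
            rw [dist_comm, ← hc]
            exact add_lt_add_of_lt_of_le h1 (h2.trans_lt (add_lt_add h3 h4)).le
        _ ≤ ε := by rw [hδdef]; linarith
    have e1 : F ⟨c, hptK _ _⟩ = F ⟨a + b, habK⟩ := hε _ _ hd
    have e2 : F ⟨a + b, habK⟩ = F ⟨a, hptK _ _⟩ + F ⟨b, hptK _ _⟩ := by
      show f _ = f _ + f _
      exact map_add f ⟨a, hKH (hptK _ _)⟩ ⟨b, hKH (hptK _ _)⟩
    show F ⟨c, _⟩ = F ⟨a, _⟩ + F ⟨b, _⟩
    rw [e1, e2]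
  refine ⟨HL, hHL, AddMonoidHom.mk' g0 hadd, ?_, ?_⟩
  · -- continuity
    rw [continuous_discrete_rng]
    intro a0
    have : (AddMonoidHom.mk' g0 hadd) ⁻¹' {a0} = Subtype.val ⁻¹'
        (⋃ (v : T) (h : v ∈ (L : Set T)) (_ : F ⟨pt v h, hptK _ _⟩ = a0), ball v δ) := by
      ext y
      simp only [Set.mem_preimage, Set.mem_singleton_iff, Set.mem_iUnion, mem_ball]
      constructor
      · intro hy
        exact ⟨y, hmemL y, hy, by simp [hδ0]⟩
      · rintro ⟨v, hvL, hva, hdv⟩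
        show g0 y = a0
        rw [← hva]
        apply hε
        calc dist (pt (y : T) (hmemL y) : T) (pt v hvL)
            ≤ dist (pt (y : T) (hmemL y)) (y : T) + (dist (y : T) v + dist v (pt v hvL)) := by
              refine (dist_triangle _ (y : T) _).trans ?_
              gcongr
              exact dist_triangle _ _ _
          _ < δ + (δ + δ) := by
              refine add_lt_add (by rw [dist_comm]; exact hptd _ _)
                (add_lt_add hdv (hptd _ _))
          _ ≤ ε := by rw [hδdef]; linarith
    rw [this]
    exact (isOpen_iUnion fun v => isOpen_iUnion fun h => isOpen_iUnion fun _ =>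
      isOpen_ball).preimage continuous_subtype_val
  · -- surjectivity
    intro a0
    obtain ⟨h, hfh⟩ := hfs a0
    have hxK : (h : T) ∈ (K : Set T) := hHK h.2
    obtain ⟨y, hyL, hyd⟩ := exists_dist_lt_of_hausdorffDist_lt' hxK hball hfin
    have hyHL : y ∈ HL := (Set.ext_iff.mp hHL y).mp hyL
    refine ⟨⟨y, hyHL⟩, ?_⟩
    show g0 ⟨y, hyHL⟩ = a0
    have : F ⟨pt y (hmemL ⟨y, hyHL⟩), hptK _ _⟩ = F ⟨(h : T), hxK⟩ := by
      apply hε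
      calc dist (pt y (hmemL ⟨y, hyHL⟩) : T) ((h : T))
          ≤ dist (pt y (hmemL ⟨y, hyHL⟩)) y + dist y ((h : T)) := dist_triangle _ _ _
        _ < δ + δ := add_lt_add (by rw [dist_comm]; exact hptd _ _) hyd
        _ ≤ ε := by rw [hδdef]; linarith
    show F ⟨pt y (hmemL ⟨y, hyHL⟩), hptK _ _⟩ = a0
    rw [this, ← hfh]
end

section
/- The set of torsion-free compact subgroups of 𝕋^ℕ is a Gδ subset of the space 𝒮(𝕋^ℕ) of compact subgroups with the Hausdorff (Vietoris) topology. -/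
attribute [local instance] PiCountable.metricSpace

open TopologicalSpace Metric EMetric

lemma isOpen_forall_subset {X : Type*} [EMetricSpace X] {U : Set X} (hU : IsOpen U) :
    IsOpen {K : NonemptyCompacts X | (K : Set X) ⊆ U} := by
  rw [EMetric.isOpen_iff]
  intro K hK
  obtain ⟨δ, hδ, hsub⟩ := K.isCompact.exists_thickening_subset_open hU hK
  refine ⟨ENNReal.ofReal δ, by simpa using hδ, fun K' hK' x hx => ?_⟩
  apply hsub
  rw [Metric.mem_thickening_iff_infEdist_lt]
  exact lt_of_le_of_lt (EMetric.infEdist_le_hausdorffEdist_of_mem hx) hK'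

/-- The set of torsion-free compact subgroups of `𝕋^ℕ` is a `Gδ` subset of the space of
compact subgroups of `𝕋^ℕ` with the Hausdorff metric. -/
theorem isGdelta_torsionFree :
    IsGδ {K : {L : NonemptyCompacts (∀ _ : ℕ, AddCircle (1 : ℝ)) //
        ∃ H : AddSubgroup (∀ _ : ℕ, AddCircle (1 : ℝ)), (L : Set (∀ _ : ℕ, AddCircle (1 : ℝ))) = H} |
      ∀ x ∈ (K.1 : Set (∀ _ : ℕ, AddCircle (1 : ℝ))),
        (∃ n : ℕ, 0 < n ∧ n • x = 0) → x = 0} := by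
  set T := ∀ _ : ℕ, AddCircle (1 : ℝ)
  have hset : {K : {L : NonemptyCompacts T //
        ∃ H : AddSubgroup T, (L : Set T) = H} |
      ∀ x ∈ (K.1 : Set T), (∃ n : ℕ, 0 < n ∧ n • x = 0) → x = 0} =
      ⋂ p : ℕ × ℕ, (fun K : {L : NonemptyCompacts T // ∃ H : AddSubgroup T, (L : Set T) = H} =>
        K.1) ⁻¹' {K : NonemptyCompacts T |
          (K : Set T) ⊆ {x : T | (p.1 + 1) • x = 0 → dist x 0 < 1 / (p.2 + 1)}} := by
    ext K
    simp only [Set.mem_setOf_eq, Set.mem_iInter, Set.mem_preimage]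
    constructor
    · rintro h ⟨n, k⟩ x hx
      intro hnx
      have := h x hx ⟨n + 1, Nat.succ_pos n, hnx⟩
      subst this
      simp only [dist_self]
      positivity
    · intro h x hx ⟨n, hn, hnx⟩
      have hd : ∀ k : ℕ, dist x 0 < 1 / (k + 1) := by
        intro k
        refine h ⟨n - 1, k⟩ hx ?_
        have : n - 1 + 1 = n := Nat.succ_pred_eq_of_pos hn
        rw [this]
        exact hnx
      have : dist x 0 ≤ 0 := by
        by_contra hlt
        push_neg at hlt
        obtain ⟨k, hk⟩ := exists_nat_one_div_lt hlt
        exact absurd (hd k) (by linarith [hk])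
      have := dist_nonneg (x := x) (y := 0)
      have : dist x 0 = 0 := le_antisymm ‹dist x 0 ≤ 0› this
      exact dist_eq_zero.1 this
  rw [hset]
  refine .iInter fun p => ?_
  refine (IsOpen.preimage (continuous_subtype_val) ?_).isGδ
  apply isOpen_forall_subset
  have h1 : IsOpen {x : T | ¬ (p.1 + 1) • x = 0} := by
    have : Continuous fun x : T => (p.1 + 1) • x := continuous_id.nsmul _
    exact (isClosed_eq this continuous_const).isOpen_compl
  have h2 : IsOpen {x : T | dist x 0 < 1 / (p.2 + 1)} :=
    isOpen_lt (continuous_id.dist continuous_const) continuous_const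
  have : {x : T | (p.1 + 1) • x = 0 → dist x 0 < 1 / (p.2 + 1)} =
      {x : T | ¬ (p.1 + 1) • x = 0} ∪ {x : T | dist x 0 < 1 / (p.2 + 1)} := by
    ext x; simp only [Set.mem_setOf_eq, Set.mem_union, imp_iff_not_or]
  rw [this]
  exact h1.union h2
end

section
/- Kuratowski–Mycielski: Let X be a metrizable space and (m_i) a sequence of positive integers. If R_i ⊆ X^{m_i} is comeager for each i, then the set of compact sets K ∈ 𝒦(X) such that, for every i, every m_i-tuple of pairwise distinct elements of K lies in R_i, is comeager in 𝒦(X). -/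
open TopologicalSpace

section Aux

open Set Metric

/-- Finite intersections of dense open sets are dense. -/
lemma dense_finset_biInter {α β : Type*} [TopologicalSpace α] {s : Finset β} {f : β → Set α}
    (ho : ∀ b ∈ s, IsOpen (f b)) (hd : ∀ b ∈ s, Dense (f b)) :
    Dense (⋂ b ∈ s, f b) := by
  classical
  induction s using Finset.induction with
  | empty => simpa using dense_univ
  | @insert a s ha ih =>
      rw [Finset.set_biInter_insert]
      exact (hd _ (Finset.mem_insert_self _ _)).inter_of_isOpen_left
        (ih (fun b hb => ho b (Finset.mem_insert_of_mem hb))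
            (fun b hb => hd b (Finset.mem_insert_of_mem hb)))
        (ho _ (Finset.mem_insert_self _ _))

variable {X : Type*} [MetricSpace X]

/-- Pulling back a dense set along an injective "coordinate selection" map gives a dense set. -/
lemma dense_comp_preimage {ι : Type*} [Fintype ι] {M : ℕ}
    (t : Fin M → ι) (ht : Function.Injective t) {U : Set (Fin M → X)} (hU : Dense U) :
    Dense {y : ι → X | y ∘ t ∈ U} := by
  classical
  rw [Metric.dense_iff]
  intro y r hr
  obtain ⟨u, hub, huU⟩ := Metric.dense_iff.mp hU (y ∘ t) r hr
  refine ⟨fun j => if h : ∃ a, t a = j then u h.choose else y j, ?_, ?_⟩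
  · rw [mem_ball, dist_pi_lt_iff hr]
    intro j
    by_cases h : ∃ a, t a = j
    · rw [dif_pos h]
      have hj : t h.choose = j := h.choose_spec
      calc dist (u h.choose) (y j) = dist (u h.choose) ((y ∘ t) h.choose) := by
            rw [Function.comp_apply, hj]
        _ ≤ dist u (y ∘ t) := dist_le_pi_dist u (y ∘ t) h.choose
        _ < r := mem_ball.mp hub
    · rw [dif_neg h]; simpa using hr
  · have : (fun j => if h : ∃ a, t a = j then u h.choose else y j) ∘ t = u := by
      funext a
      have h : ∃ a', t a' = t a := ⟨a, rfl⟩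
      have : h.choose = a := ht h.choose_spec
      simp only [Function.comp_apply, dif_pos h, this]
    rw [Set.mem_setOf_eq, this]
    exact huU

/-- The set of compacts all of whose `δ`-separated `M`-tuples lie in `U`. -/
def sepSet (M : ℕ) (δ : ℝ) (U : Set (Fin M → X)) : Set (NonemptyCompacts X) :=
  {K | ∀ f : Fin M → X, (∀ j, f j ∈ (K : Set X)) →
      (∀ j j', j ≠ j' → δ ≤ dist (f j) (f j')) → f ∈ U}

lemma isOpen_sepSet {M : ℕ} {δ : ℝ} (hδ : 0 < δ) {U : Set (Fin M → X)} (hU : IsOpen U) :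
    @IsOpen _ (vietorisTopology X) (sepSet M δ U) := by
  letI tV : TopologicalSpace (NonemptyCompacts X) := vietorisTopology X
  show IsOpen (sepSet M δ U)
  rw [isOpen_iff_forall_mem_open]
  intro K hK
  set S : Set (Fin M → X) := {f | ∀ j j', j ≠ j' → δ ≤ dist (f j) (f j')} with hSdef
  have hScl : IsClosed S := by
    have : S = ⋂ (p : Fin M × Fin M) (_ : p.1 ≠ p.2), {f | δ ≤ dist (f p.1) (f p.2)} := by
      ext f
      simp only [hSdef, Set.mem_setOf_eq, Set.mem_iInter]
      exact ⟨fun h p hp => h p.1 p.2 hp, fun h j j' hjj => h (j, j') hjj⟩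
    rw [this]
    exact isClosed_iInter fun p => isClosed_iInter fun _ =>
      isClosed_le continuous_const ((continuous_apply p.1).dist (continuous_apply p.2))
  have hG : IsOpen (U ∪ Sᶜ) := hU.union hScl.isOpen_compl
  have hC : IsCompact (Set.univ.pi fun _ : Fin M => (K : Set X)) :=
    isCompact_univ_pi fun _ => K.toCompacts.isCompact
  have hCG : (Set.univ.pi fun _ : Fin M => (K : Set X)) ⊆ U ∪ Sᶜ := by
    intro f hf
    by_cases hfS : f ∈ S
    · exact Or.inl (hK f (fun j => hf j (Set.mem_univ j)) hfS)
    · exact Or.inr hfS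
  obtain ⟨ε, hε, hthick⟩ := hC.exists_thickening_subset_open hG hCG
  refine ⟨{K' : NonemptyCompacts X | (K' : Set X) ⊆ Metric.thickening ε (K : Set X)},
    ?_, ?_, ?_⟩
  · intro K' hK' f hfK hsep
    have hft : f ∈ Metric.thickening ε (Set.univ.pi fun _ : Fin M => (K : Set X)) := by
      have h1 : ∀ j, ∃ z ∈ (K : Set X), dist (f j) z < ε := fun j =>
        Metric.mem_thickening_iff.mp (hK' (hfK j))
      choose g hg hdg using h1
      rw [Metric.mem_thickening_iff]
      exact ⟨g, fun j _ => hg j, (dist_pi_lt_iff hε).mpr hdg⟩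
    rcases hthick hft with h | h
    · exact h
    · exact absurd hsep h
  · exact isOpen_generateFrom_of_mem (Or.inl ⟨_, Metric.isOpen_thickening, rfl⟩)
  · exact Metric.self_subset_thickening hε (K : Set X)

lemma dense_sepSet {M : ℕ} (hM : 0 < M) {δ : ℝ} (hδ : 0 < δ) {U : Set (Fin M → X)}
    (hUo : IsOpen U) (hUd : Dense U) :
    @Dense _ (vietorisTopology X) (sepSet M δ U) := by
  classical
  letI tV : TopologicalSpace (NonemptyCompacts X) := vietorisTopology X
  rw [(isTopologicalBasis_of_subbasis (rfl :
      tV = TopologicalSpace.generateFrom _)).dense_iff]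
  rintro o ⟨F, ⟨hFfin, hFsub⟩, rfl⟩ ⟨K₀, hK₀⟩
  -- split the subbasic sets into the two kinds
  set F1 : Set (Set (NonemptyCompacts X)) :=
    {S ∈ F | ∃ W, IsOpen W ∧ S = {K : NonemptyCompacts X | (K : Set X) ⊆ W}} with hF1def
  set F2 : Set (Set (NonemptyCompacts X)) := F \ F1 with hF2def
  haveI : Finite F1 := (hFfin.subset (Set.sep_subset _ _)).to_subtype
  have hF2fin : F2.Finite := hFfin.subset Set.diff_subset
  haveI : Fintype F2 := hF2fin.fintype
  have h1 : ∀ S : F1, ∃ W, IsOpen W ∧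
      (S : Set (NonemptyCompacts X)) = {K : NonemptyCompacts X | (K : Set X) ⊆ W} :=
    fun S => S.2.2
  choose W hWo hWeq using h1
  have h2 : ∀ S : F2, ∃ V, IsOpen V ∧
      (S : Set (NonemptyCompacts X)) = {K : NonemptyCompacts X | ((K : Set X) ∩ V).Nonempty} := by
    rintro ⟨S, hSF, hSn⟩
    rcases hFsub hSF with h | ⟨V, hVo, hVe⟩
    · exact absurd ⟨hSF, h⟩ hSn
    · exact ⟨V, hVo, hVe⟩
  choose V hVo hVeq using h2
  set A : Set X := ⋂ S : F1, W S with hAdef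
  have hAo : IsOpen A := isOpen_iInter_of_finite hWo
  have hK₀A : (K₀ : Set X) ⊆ A := by
    refine Set.subset_iInter fun S => ?_
    have : K₀ ∈ (S : Set (NonemptyCompacts X)) := hK₀ _ S.2.1
    rwa [hWeq S] at this
  have hx : ∀ S : F2, ∃ x, x ∈ (K₀ : Set X) ∩ V S := by
    intro S
    have : K₀ ∈ (S : Set (NonemptyCompacts X)) := hK₀ _ S.2.1
    rw [hVeq S] at this
    exact this
  choose x hx using hx
  obtain ⟨x₀, hx₀⟩ := K₀.nonempty
  -- the finite configuration space
  set ι : Type _ := F2 ⊕ Unit with hιdef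
  set O : ι → Set X := Sum.elim (fun S => A ∩ V S) (fun _ => A) with hOdef
  set y₀ : ι → X := Sum.elim (fun S => x S) (fun _ => x₀) with hy₀def
  have hOo : ∀ j, IsOpen (O j) := by
    rintro (S | u)
    · exact (hAo.inter (hVo S))
    · exact hAo
  have hy₀O : y₀ ∈ Set.univ.pi O := by
    rintro (S | u) -
    · exact ⟨hK₀A (hx S).1, (hx S).2⟩
    · exact hK₀A hx₀
  -- dense open set of good configurations
  set D : Set (ι → X) :=
    ⋂ t ∈ Finset.univ.filter (fun t : Fin M → ι => Function.Injective t),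
      {y : ι → X | y ∘ t ∈ U} with hDdef
  have hDd : Dense D := by
    refine dense_finset_biInter (fun t ht => ?_) (fun t ht => ?_)
    · exact hUo.preimage (continuous_pi fun a => continuous_apply (t a))
    · exact dense_comp_preimage t (Finset.mem_filter.mp ht).2 hUd
  obtain ⟨y, hyD, hyO⟩ := hDd.exists_mem_open (isOpen_set_pi Set.finite_univ
    (fun j _ => hOo j)) ⟨y₀, hy₀O⟩
  -- the finite compact set
  set K : NonemptyCompacts X :=
    ⟨⟨Set.range y, (Set.finite_range y).isCompact⟩, Set.range_nonempty y⟩ with hKdef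
  have hKA : Set.range y ⊆ A := by
    rintro - ⟨j, rfl⟩
    rcases j with S | u
    · exact (hyO (Sum.inl S) (Set.mem_univ _)).1
    · exact hyO (Sum.inr u) (Set.mem_univ _)
  refine ⟨K, ?_, ?_⟩
  · -- K ∈ ⋂₀ F
    intro S hS
    by_cases h : S ∈ F1
    · rw [show S = ((⟨S, h⟩ : F1) : Set (NonemptyCompacts X)) from rfl, hWeq ⟨S, h⟩]
      exact fun z hz => Set.iInter_subset (fun S : F1 => W S) ⟨S, h⟩ (hKA hz)
    · have hS2 : S ∈ F2 := ⟨hS, h⟩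
      rw [show S = ((⟨S, hS2⟩ : F2) : Set (NonemptyCompacts X)) from rfl, hVeq ⟨S, hS2⟩]
      exact ⟨y (Sum.inl ⟨S, hS2⟩), Set.mem_range_self _,
        (hyO (Sum.inl ⟨S, hS2⟩) (Set.mem_univ _)).2⟩
  · -- K ∈ sepSet
    intro f hfK hsep
    have hf : ∀ a, ∃ j, y j = f a := fun a => hfK a
    choose t htf using hf
    have htinj : Function.Injective t := by
      intro a a' haa
      by_contra hne
      have h1 : δ ≤ dist (f a) (f a') := hsep a a' hne
      have h2 : f a = f a' := by rw [← htf a, ← htf a', haa]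
      rw [h2, dist_self] at h1
      exact absurd (lt_of_lt_of_le hδ h1) (lt_irrefl 0)
    have hyt : y ∈ {y : ι → X | y ∘ t ∈ U} := by
      have := Set.mem_iInter₂.mp hyD t
        (Finset.mem_filter.mpr ⟨Finset.mem_univ _, htinj⟩)
      exact this
    have : y ∘ t = f := funext htf
    rwa [Set.mem_setOf_eq, this] at hyt

end Aux

/-- Kuratowski–Mycielski: if `X` is metrizable and `R i ⊆ X^(m i)` is comeager for each `i`,
then the set of nonempty compact sets `K` all of whose tuples of pairwise distinct elements
lie in the corresponding `R i` is comeager in the Vietoris hyperspace of `X`. -/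
theorem kuratowski_mycielski {X : Type*} [TopologicalSpace X] [MetrizableSpace X]
    (m : ℕ → ℕ) (hm : ∀ i, 0 < m i) (R : ∀ i, Set (Fin (m i) → X))
    (hR : ∀ i, R i ∈ residual (Fin (m i) → X)) :
    {K : NonemptyCompacts X | ∀ i, ∀ f : Fin (m i) → X,
        (∀ j, f j ∈ (K : Set X)) → Function.Injective f → f ∈ R i}
      ∈ @residual (NonemptyCompacts X) (vietorisTopology X) := by
  classical
  letI : MetricSpace X := TopologicalSpace.metrizableSpaceMetric X
  letI tV : TopologicalSpace (NonemptyCompacts X) := vietorisTopology X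
  -- choose countable families of dense open sets
  have h : ∀ i, ∃ u : ℕ → Set (Fin (m i) → X),
      (∀ n, IsOpen (u n)) ∧ (∀ n, Dense (u n)) ∧ (⋂ n, u n) ⊆ R i := by
    intro i
    rcases mem_residual_iff.mp (hR i) with ⟨S, hSo, hSd, hScnt, hSsub⟩
    obtain ⟨u, hu⟩ := (hScnt.insert Set.univ).exists_eq_range (Set.insert_nonempty _ _)
    refine ⟨u, fun n => ?_, fun n => ?_, fun f hf => ?_⟩
    · have : u n ∈ insert Set.univ S := hu ▸ Set.mem_range_self n
      rcases this with h | h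
      · rw [h]; exact isOpen_univ
      · exact hSo _ h
    · have : u n ∈ insert Set.univ S := hu ▸ Set.mem_range_self n
      rcases this with h | h
      · rw [h]; exact dense_univ
      · exact hSd _ h
    · refine hSsub fun s hs => ?_
      have : s ∈ Set.range u := hu ▸ Set.mem_insert_of_mem _ hs
      obtain ⟨n, rfl⟩ := this
      exact Set.mem_iInter.mp hf n
  choose u huo hud husub using h
  have key : ∀ p : ℕ × ℕ × ℕ,
      sepSet (m p.1) (1 / ((p.2.2 : ℝ) + 1)) (u p.1 p.2.1) ∈ residual (NonemptyCompacts X) := by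
    intro p
    have hδ : (0 : ℝ) < 1 / ((p.2.2 : ℝ) + 1) := by positivity
    exact residual_of_dense_open (isOpen_sepSet hδ (huo _ _))
      (dense_sepSet (hm _) hδ (huo _ _) (hud _ _))
  have hint : (⋂ p : ℕ × ℕ × ℕ,
      sepSet (m p.1) (1 / ((p.2.2 : ℝ) + 1)) (u p.1 p.2.1)) ∈ residual (NonemptyCompacts X) :=
    countable_iInter_mem.mpr key
  refine Filter.mem_of_superset hint ?_
  intro K hK i f hfK hfinj
  have hsep : ∃ δ > (0 : ℝ), ∀ j j', j ≠ j' → δ ≤ dist (f j) (f j') := by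
    set s : Finset (Fin (m i) × Fin (m i)) := Finset.univ.filter fun p => p.1 ≠ p.2 with hsdef
    rcases s.eq_empty_or_nonempty with h | h
    · refine ⟨1, one_pos, fun j j' hjj => absurd ?_ (Finset.notMem_empty (j, j'))⟩
      rw [← h]
      exact Finset.mem_filter.mpr ⟨Finset.mem_univ (j, j'), hjj⟩
    · refine ⟨s.inf' h (fun p => dist (f p.1) (f p.2)), ?_, ?_⟩
      · rw [gt_iff_lt, Finset.lt_inf'_iff]
        intro p hp
        exact dist_pos.mpr fun hEq => (Finset.mem_filter.mp hp).2 (hfinj hEq)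
      · intro j j' hjj
        exact Finset.inf'_le _ (Finset.mem_filter.mpr ⟨Finset.mem_univ (j, j'), hjj⟩)
  obtain ⟨δ, hδ, hsepδ⟩ := hsep
  refine husub i (Set.mem_iInter.mpr fun n => ?_)
  obtain ⟨k, hk⟩ := exists_nat_one_div_lt hδ
  exact Set.mem_iInter.mp hK (i, n, k) f hfK
    (fun j j' hjj => le_trans hk.le (hsepδ j j' hjj))
end

section
/- Let G be a compact metrizable group and n ≥ 1 a fixed integer. The set of compact subgroups K of G having at least n connected components is open in the space 𝒮(G) of compact subgroups of G with the Hausdorff metric. -/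
/-!
Two points of a compact set `K` in different components are separated by a partition of `K` into
two disjoint compact pieces, and those pieces have disjoint `δ`-thickenings. A compact set `L`
within Hausdorff distance `δ` of `K` lies in the union of the two thickenings, so its points near
the two given points lie in different components of `L`. Picking, for each of `n` components of
`K`, a point of `L` nearby therefore gives `n` distinct components of `L`.
-/

open TopologicalSpace

section

open Filter Metric Set Topology

variable {α : Type*}

theorem notMem_connectedComponentIn_of_subset_union [TopologicalSpace α] {L U V : Set α}
    (hU : IsOpen U) (hV : IsOpen V) (hUV : Disjoint U V) (hL : L ⊆ U ∪ V) {a b : α}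
    (haL : a ∈ L) (haU : a ∈ U) (hbV : b ∈ V) : b ∉ connectedComponentIn L a := fun hb =>
  have hsub : connectedComponentIn L a ⊆ U :=
    isPreconnected_connectedComponentIn.subset_left_of_subset_union hU hV hUV
      ((connectedComponentIn_subset L a).trans hL) ⟨a, mem_connectedComponentIn haL, haU⟩
  disjoint_left.mp hUV (hsub hb) hbV

theorem IsCompact.exists_isCompact_partition_of_connectedComponents_ne [TopologicalSpace α]
    [T2Space α] {K : Set α} (hK : IsCompact K) {a b : K}
    (hab : (a : ConnectedComponents K) ≠ b) :
    ∃ A B : Set α, IsCompact A ∧ IsCompact B ∧ Disjoint A B ∧ K = A ∪ B ∧ (a : α) ∈ A ∧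
      (b : α) ∈ B := by
  have : CompactSpace K := isCompact_iff_compactSpace.mp hK
  obtain ⟨V, hV, haV, hbV⟩ := exists_isClopen_of_totally_separated hab
  set U : Set K := ConnectedComponents.mk ⁻¹' V
  have hU : IsClopen U := hV.preimage ConnectedComponents.continuous_coe
  refine ⟨(↑) '' U, (↑) '' Uᶜ,
    hU.isClosed.isCompact.image continuous_subtype_val,
    hU.compl.isClosed.isCompact.image continuous_subtype_val,
    (disjoint_image_iff Subtype.val_injective).mpr disjoint_compl_right, ?_,
    ⟨a, haV, rfl⟩, ⟨b, hbV, rfl⟩⟩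
  rw [← image_union, union_compl_self, image_univ, Subtype.range_coe]

variable [MetricSpace α]

theorem IsCompact.eventually_notMem_connectedComponentIn_of_connectedComponents_ne {K : Set α}
    (hK : IsCompact K) {a b : K} (hab : (a : ConnectedComponents K) ≠ b) :
    ∀ᶠ δ in 𝓝[>] 0, ∀ L ⊆ thickening δ K, ∀ a' ∈ L, ∀ b' : α, dist a' a < δ → dist b' b < δ →
      b' ∉ connectedComponentIn L a' := by
  obtain ⟨A, B, hA, hB, hAB, rfl, haA, hbB⟩ :=
    hK.exists_isCompact_partition_of_connectedComponents_ne hab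
  obtain ⟨δ₀, hδ₀, hdisj⟩ := hAB.exists_thickenings hA hB.isClosed
  filter_upwards [Ioo_mem_nhdsGT hδ₀] with δ hδ L hL a' ha'L b' ha' hb'
  rw [thickening_union] at hL
  refine notMem_connectedComponentIn_of_subset_union isOpen_thickening isOpen_thickening
    hdisj (hL.trans (union_subset_union (thickening_mono hδ.2.le _) (thickening_mono hδ.2.le _)))
    ha'L (mem_thickening_iff.mpr ⟨a, haA, ha'.trans hδ.2⟩)
    (mem_thickening_iff.mpr ⟨b, hbB, hb'.trans hδ.2⟩)

namespace TopologicalSpace.NonemptyCompacts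

variable {K L : NonemptyCompacts α} {δ : ℝ}

theorem hausdorffEDist_ne_top (L K : NonemptyCompacts α) :
    hausdorffEDist (L : Set α) K ≠ ⊤ :=
  hausdorffEDist_ne_top_of_nonempty_of_bounded L.nonempty K.nonempty L.isCompact.isBounded
    K.isCompact.isBounded

theorem exists_dist_lt_of_dist_lt (h : dist L K < δ) {x : α} (hx : x ∈ K) :
    ∃ y ∈ L, dist y x < δ :=
  exists_dist_lt_of_hausdorffDist_lt' hx h (hausdorffEDist_ne_top L K)

theorem subset_thickening_of_dist_lt (h : dist L K < δ) : (L : Set α) ⊆ thickening δ K :=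
  fun _ hy => mem_thickening_iff.mpr <|
    exists_dist_lt_of_hausdorffDist_lt hy h (hausdorffEDist_ne_top L K)

theorem isOpen_setOf_exists_injective_connectedComponents (ι : Type*) [Finite ι] :
    IsOpen {K : NonemptyCompacts α | ∃ f : ι → ConnectedComponents (K : Set α), f.Injective} := by
  refine isOpen_iff_mem_nhds.mpr fun K ⟨f, hf⟩ => ?_
  choose x hx using fun i => ConnectedComponents.surjective_coe (f i)
  have hsep := eventually_all.2 fun i => eventually_all.2 fun j => eventually_imp_distrib_left.2
    fun hij : i ≠ j => K.isCompact.eventually_notMem_connectedComponentIn_of_connectedComponents_ne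
      (a := x i) (b := x j) (by rw [hx, hx]; exact hf.ne hij)
  obtain ⟨δ, hsep, hδ⟩ := (hsep.and self_mem_nhdsWithin).exists
  filter_upwards [ball_mem_nhds K hδ] with L hL
  choose y hyL hy using fun i => exists_dist_lt_of_dist_lt hL (x i).2
  refine ⟨fun i => ConnectedComponents.mk ⟨y i, hyL i⟩, fun i j hij => by_contra fun hne =>
    hsep i j hne L (subset_thickening_of_dist_lt hL) (y i) (hyL i) (y j) (hy i) (hy j) ?_⟩
  rw [connectedComponentIn_eq_image (hyL i)]
  exact ⟨⟨y j, hyL j⟩, ConnectedComponents.coe_eq_coe'.mp hij.symm, rfl⟩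

end TopologicalSpace.NonemptyCompacts

end

theorem isOpen_atLeast_n_components_general {G : Type*} [MetricSpace G] [Group G] (n : ℕ) :
    IsOpen {K : {L : NonemptyCompacts G // ∃ H : Subgroup G, (L : Set G) = H} |
      ∃ f : Fin n → ConnectedComponents (K.1 : Set G), Function.Injective f} :=
  (NonemptyCompacts.isOpen_setOf_exists_injective_connectedComponents (Fin n)).preimage
    continuous_subtype_val

/-- For a compact metrizable group `G` and `n ≥ 1`, the set of compact subgroups of `G` having
at least `n` connected components is open in the space of compact subgroups of `G` with the
Hausdorff metric. -/
theorem isOpen_atLeast_n_components {G : Type*} [MetricSpace G] [Group G] [IsTopologicalGroup G]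
    [CompactSpace G] (n : ℕ) (hn : 1 ≤ n) :
    IsOpen {K : {L : NonemptyCompacts G // ∃ H : Subgroup G, (L : Set G) = H} |
      ∃ f : Fin n → ConnectedComponents (K.1 : Set G), Function.Injective f} :=
  isOpen_atLeast_n_components_general n
end
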